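/- arXiv:1510.03961 — 3 statements merged into one kernel-verified Lean document; each statement's English description precedes it below -/
import Mathlib

section
/- Let S be a simplicial set which is a quasicategory, and let ho S denote its homotopy category (the value at S of Mathlib's functor SSet.hoFunctor : SSet ⥤ Cat), whose objects are the 0-simplices of S and in which every 1-simplex e of S determines a morphism from its initial vertex δ₁ e to its terminal vertex δ₀ e. Then: (a) for all 0-simplices x, y of S and every morphism φ : x ⟶ y in ho S, there exists a 1-simplex e of S with δ₁ e = x and δ₀ e = y whose associated morphism in ho S equals φ; and (b) if e and e′ are 1-simplices of S with δ₁ e = δ₁ e′ = x and δ₀ e = δ₀ e′ = y whose associated morphisms in ho S coincide, then there exists a 2-simplex σ of S with δ₂ σ = e, δ₁ σ = e′, and δ₀ σ = σ₀ y (the degenerate 1-simplex at y); that is, e and e′ are homotopic. -/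
/-!
Fillers of the inner horns `Λ[2, 1]`, `Λ[3, 1]` and `Λ[3, 2]` make the `2`-truncation of a
quasicategory a `Quasicategory₂`, whose homotopy category `HomotopyCategory₂` has homotopy
classes of edges as morphisms. A morphism of `Ho S` is a path of edges, and `Λ[2, 1]`-fillers
compose such a path into a single edge. Sending each edge to its homotopy class defines a
functor `Ho S ⥤ HomotopyCategory₂`, so two edges with the same class in `Ho S` are
homotopic, which is a `2`-simplex of the required shape.
-/

open CategoryTheory

universe u

namespace HoCat

variable (S : SSet.{u})

/-- The `n`-simplices of `S`. -/
abbrev Simp (n : ℕ) : Type u := S.obj (Opposite.op (SimplexCategory.mk n))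

/-- The face map `δᵢ`. -/
abbrev δ {n : ℕ} (i : Fin (n + 2)) : Simp S (n + 1) → Simp S n :=
  SimplicialObject.δ S i

/-- The degeneracy map `σᵢ`. -/
abbrev σ {n : ℕ} (i : Fin (n + 1)) : Simp S n → Simp S (n + 1) :=
  SimplicialObject.σ S i

/-- The vertices of `S`, as the underlying type of the quiver of `1`-simplices. -/
def HoVert : Type u := Simp S 0

/-- A vertex of `S`, as an object of the free category on the `1`-simplices. -/
def vert (x : Simp S 0) : HoVert S := x

/-- Edges from `x` to `y`: `1`-simplices `e` with `δ₁ e = x` and `δ₀ e = y`. -/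
def HoEdge (x y : Simp S 0) : Type u :=
  { e : Simp S 1 // δ S 1 e = x ∧ δ S 0 e = y }

instance : Quiver.{u} (HoVert S) :=
  ⟨fun x y => HoEdge S x y⟩

variable {S}

/-- An edge, as a quiver arrow between vertices. -/
def edgeArrow {x y : Simp S 0} (e : HoEdge S x y) : vert S x ⟶ vert S y := e

variable (S)

/-- The relations on the free category on the `1`-simplices of `S` generated by the
`2`-simplices: for each `2`-simplex `σ`, the composite of (the edges) `δ₂ σ` and `δ₀ σ` is
related to `δ₁ σ`; moreover each degenerate edge `σ₀ x` is related to the identity of `x`. -/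
inductive HoRel : HomRel (Paths (HoVert S))
  | triangle (τ : Simp S 2) (x y z : Simp S 0)
      (e₀₁ : HoEdge S x y) (e₁₂ : HoEdge S y z) (e₀₂ : HoEdge S x z)
      (h₂ : e₀₁.1 = δ S 2 τ) (h₀ : e₁₂.1 = δ S 0 τ) (h₁ : e₀₂.1 = δ S 1 τ) :
      HoRel ((Paths.of (HoVert S)).map (edgeArrow e₀₁) ≫ (Paths.of (HoVert S)).map (edgeArrow e₁₂))
        ((Paths.of (HoVert S)).map (edgeArrow e₀₂))
  | degenerate (x : Simp S 0) (e : HoEdge S x x) (he : e.1 = σ S 0 x) :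
      HoRel ((Paths.of (HoVert S)).map (edgeArrow e)) (𝟙 ((Paths.of (HoVert S)).obj (vert S x)))

/-- The homotopy category of `S`: the quotient of the free category on the `1`-simplices of
`S` by the relations generated by the `2`-simplices. -/
abbrev Ho : Type u := CategoryTheory.Quotient (HoRel S)

variable {S}

/-- The morphism of `Ho S` associated to a `1`-simplex `e` with `δ₁ e = x` and `δ₀ e = y`. -/
def homOfEdge {x y : Simp S 0} (e : Simp S 1) (h₁ : δ S 1 e = x) (h₀ : δ S 0 e = y) :
    (Quotient.functor (HoRel S)).obj ((Paths.of (HoVert S)).obj (vert S x)) ⟶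
      (Quotient.functor (HoRel S)).obj ((Paths.of (HoVert S)).obj (vert S y)) :=
  (Quotient.functor (HoRel S)).map ((Paths.of (HoVert S)).map (edgeArrow (⟨e, h₁, h₀⟩ : HoEdge S x y)))

end HoCat

open HoCat

namespace SSet

open Simplicial

variable {X : SSet.{u}}

theorem Quasicategory.exists_simplex_δ_eq [Quasicategory X] {n : ℕ} {i : Fin (n + 3)}
    (h₀ : 0 < i) (hₙ : i < Fin.last (n + 2)) (f : ∀ j : Fin (n + 3), j ≠ i → X _⦋n + 1⦌)
    (hf : ∀ (a b : Fin (n + 2)) (ha : a.castSucc ≠ i) (hb : b.succ ≠ i), a ≤ b →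
      X.δ b (f a.castSucc ha) = X.δ a (f b.succ hb)) :
    ∃ σ : X _⦋n + 2⦌, ∀ (j : Fin (n + 3)) (hj : j ≠ i), X.δ j σ = f j hj := by
  have hcompat : horn.IsCompatible (fun j hj ↦ yonedaEquiv.symm (f j hj)) := by
    intro j k hj hk hjk
    obtain ⟨a, rfl⟩ := j.eq_castSucc_of_ne_last (Fin.ne_last_of_lt hjk)
    obtain ⟨b, rfl⟩ := k.eq_succ_of_ne_zero (Fin.ne_zero_of_lt hjk)
    simp only [stdSimplex.δ_comp_yonedaEquiv_symm, Fin.pred_succ, Fin.castPred_castSucc,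
      hf a b hj hk (Fin.castSucc_lt_succ_iff.mp hjk)]
  obtain ⟨σ, hσ⟩ := Quasicategory.hornFilling h₀ hₙ hcompat.desc
  refine ⟨yonedaEquiv σ, fun j hj ↦ ?_⟩
  have hface := hcompat.ι_desc j hj
  rw [hσ, horn.ι_ι_assoc] at hface
  rw [← stdSimplex.yonedaEquiv_δ_comp, hface, Equiv.apply_symm_apply]

variable [Quasicategory X]

section

variable {x₀ x₁ x₂ x₃ : X _⦋0⦌}

theorem Quasicategory.nonempty_compStruct (e₀₁ : Edge x₀ x₁) (e₁₂ : Edge x₁ x₂) :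
    Nonempty (Σ e₀₂ : Edge x₀ x₂, Edge.CompStruct e₀₁ e₁₂ e₀₂) := by
  obtain ⟨σ, hσ⟩ := Quasicategory.exists_simplex_δ_eq (n := 0) (i := 1) (by decide) (by decide)
    (fun j _ ↦ if j = 0 then e₁₂.edge else e₀₁.edge) (by
      intro a b ha hb hab
      fin_cases a <;> fin_cases b <;> simp_all)
  have h₀ : X.δ 0 σ = e₁₂.edge := hσ 0 (by decide)
  have h₂ : X.δ 2 σ = e₀₁.edge := hσ 2 (by decide)
  have h₁₁ : X.δ 1 (X.δ 1 σ) = X.δ 1 (X.δ 2 σ) := X.δ_comp_δ_self_apply (i := 1) σ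
  have h₀₁ : X.δ 0 (X.δ 1 σ) = X.δ 0 (X.δ 0 σ) := X.δ_comp_δ_apply (i := 0) (j := 0) le_rfl σ
  exact ⟨⟨Edge.mk (X.δ 1 σ) (by rw [h₁₁, h₂, e₀₁.src_eq]) (by rw [h₀₁, h₀, e₁₂.tgt_eq]),
    Edge.CompStruct.mk σ h₂ h₀ rfl⟩⟩

variable {e₀₁ : Edge x₀ x₁} {e₁₂ : Edge x₁ x₂} {e₂₃ : Edge x₂ x₃} {e₀₂ : Edge x₀ x₂}
  {e₁₃ : Edge x₁ x₃} {e₀₃ : Edge x₀ x₃}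

theorem Quasicategory.nonempty_compStruct_of_horn₃₁ (f₃ : Edge.CompStruct e₀₁ e₁₂ e₀₂)
    (f₀ : Edge.CompStruct e₁₂ e₂₃ e₁₃) (f₂ : Edge.CompStruct e₀₁ e₁₃ e₀₃) :
    Nonempty (Edge.CompStruct e₀₂ e₂₃ e₀₃) := by
  obtain ⟨σ, hσ⟩ := Quasicategory.exists_simplex_δ_eq (n := 1) (i := 1) (by decide) (by decide)
    (fun j _ ↦ if j = 0 then f₀.simplex else if j = 2 then f₂.simplex else f₃.simplex) (by
      intro a b ha hb hab
      fin_cases a <;> fin_cases b <;> simp_all)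
  have h₀ : X.δ 0 σ = f₀.simplex := hσ 0 (by decide)
  have h₂ : X.δ 2 σ = f₂.simplex := hσ 2 (by decide)
  have h₃ : X.δ 3 σ = f₃.simplex := hσ 3 (by decide)
  have h₂₁ : X.δ 2 (X.δ 1 σ) = X.δ 1 (X.δ 3 σ) :=
    (X.δ_comp_δ_apply (i := 1) (j := 2) (by decide) σ).symm
  have h₀₁ : X.δ 0 (X.δ 1 σ) = X.δ 0 (X.δ 0 σ) := X.δ_comp_δ_apply (i := 0) (j := 0) le_rfl σ
  have h₁₁ : X.δ 1 (X.δ 1 σ) = X.δ 1 (X.δ 2 σ) :=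
    (X.δ_comp_δ_apply (i := 1) (j := 1) le_rfl σ).symm
  exact ⟨Edge.CompStruct.mk (X.δ 1 σ) (by rw [h₂₁, h₃, f₃.d₁]) (by rw [h₀₁, h₀, f₀.d₀])
    (by rw [h₁₁, h₂, f₂.d₁])⟩

theorem Quasicategory.nonempty_compStruct_of_horn₃₂ (f₃ : Edge.CompStruct e₀₁ e₁₂ e₀₂)
    (f₀ : Edge.CompStruct e₁₂ e₂₃ e₁₃) (f₁ : Edge.CompStruct e₀₂ e₂₃ e₀₃) :
    Nonempty (Edge.CompStruct e₀₁ e₁₃ e₀₃) := by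
  obtain ⟨σ, hσ⟩ := Quasicategory.exists_simplex_δ_eq (n := 1) (i := 2) (by decide) (by decide)
    (fun j _ ↦ if j = 0 then f₀.simplex else if j = 1 then f₁.simplex else f₃.simplex) (by
      intro a b ha hb hab
      fin_cases a <;> fin_cases b <;> simp_all)
  have h₀ : X.δ 0 σ = f₀.simplex := hσ 0 (by decide)
  have h₁ : X.δ 1 σ = f₁.simplex := hσ 1 (by decide)
  have h₃ : X.δ 3 σ = f₃.simplex := hσ 3 (by decide)
  have h₂₂ : X.δ 2 (X.δ 2 σ) = X.δ 2 (X.δ 3 σ) :=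
    (X.δ_comp_δ_apply (i := 2) (j := 2) le_rfl σ).symm
  have h₀₂ : X.δ 0 (X.δ 2 σ) = X.δ 1 (X.δ 0 σ) := X.δ_comp_δ_apply (i := 0) (j := 1) (by decide) σ
  have h₁₂ : X.δ 1 (X.δ 2 σ) = X.δ 1 (X.δ 1 σ) := X.δ_comp_δ_apply (i := 1) (j := 1) le_rfl σ
  exact ⟨Edge.CompStruct.mk (X.δ 2 σ) (by rw [h₂₂, h₃, f₃.d₂]) (by rw [h₀₂, h₀, f₀.d₁])
    (by rw [h₁₂, h₁, f₁.d₁])⟩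

end

instance Quasicategory.quasicategory₂_truncation : ((truncation 2).obj X).Quasicategory₂ where
  fill21 e₀₁ e₁₂ := nonempty_compStruct (X := X) e₀₁ e₁₂
  fill31 f₃ f₀ f₂ := nonempty_compStruct_of_horn₃₁ (X := X) f₃ f₀ f₂
  fill32 f₃ f₀ f₁ := nonempty_compStruct_of_horn₃₂ (X := X) f₃ f₀ f₁

end SSet

namespace HoCat

open SSet

variable {S : SSet.{u}}

lemma homOfEdge_comp_homOfEdge {x₀ x₁ x₂ : Simp S 0} {e₀₁ : Edge x₀ x₁} {e₁₂ : Edge x₁ x₂}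
    {e₀₂ : Edge x₀ x₂} (s : Edge.CompStruct e₀₁ e₁₂ e₀₂) :
    homOfEdge e₀₁.edge e₀₁.src_eq e₀₁.tgt_eq ≫ homOfEdge e₁₂.edge e₁₂.src_eq e₁₂.tgt_eq =
      homOfEdge e₀₂.edge e₀₂.src_eq e₀₂.tgt_eq :=
  ((Quotient.functor _).map_comp _ _).symm.trans <| CategoryTheory.Quotient.sound _ <|
    HoRel.triangle s.simplex x₀ x₁ x₂ ⟨_, e₀₁.src_eq, e₀₁.tgt_eq⟩ ⟨_, e₁₂.src_eq, e₁₂.tgt_eq⟩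
      ⟨_, e₀₂.src_eq, e₀₂.tgt_eq⟩ s.d₂.symm s.d₀.symm s.d₁.symm

lemma homOfEdge_id (x : Simp S 0) :
    homOfEdge (Edge.id x).edge (Edge.id x).src_eq (Edge.id x).tgt_eq = 𝟙 _ :=
  CategoryTheory.Quotient.sound _ (HoRel.degenerate x _ rfl)

def HoEdge.toEdge {x y : Simp S 0} (e : HoEdge S x y) : Edge x y := Edge.mk e.1 e.2.1 e.2.2

variable [Quasicategory S]

lemma exists_homOfEdge_eq {x y : Simp S 0}
    (φ : (Quotient.functor (HoRel S)).obj ((Paths.of (HoVert S)).obj (vert S x)) ⟶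
      (Quotient.functor (HoRel S)).obj ((Paths.of (HoVert S)).obj (vert S y))) :
    ∃ (e : Simp S 1) (h₁ : δ S 1 e = x) (h₀ : δ S 0 e = y), homOfEdge e h₁ h₀ = φ := by
  obtain ⟨p, rfl⟩ := (Quotient.functor (HoRel S)).map_surjective φ
  suffices ∀ {z : HoVert S} (p : Quiver.Path (vert S x) z), ∃ (e : Simp S 1)
      (h₁ : δ S 1 e = x) (h₀ : δ S 0 e = z), homOfEdge e h₁ h₀ = (Quotient.functor _).map p from
    this p
  intro z p
  induction p with
  | nil => exact ⟨_, _, _, homOfEdge_id x⟩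
  | cons p f ih =>
    obtain ⟨e, h₁, h₀, he⟩ := ih
    obtain ⟨⟨g, s⟩⟩ := Quasicategory.nonempty_compStruct (Edge.mk e h₁ h₀) (HoEdge.toEdge f)
    refine ⟨g.edge, g.src_eq, g.tgt_eq, ?_⟩
    rw [← homOfEdge_comp_homOfEdge s]
    exact congrArg (· ≫ _) he

noncomputable def toHomotopyCategory₂ : Ho S ⥤ ((truncation 2).obj S).HomotopyCategory₂ :=
  let F : Paths (HoVert S) ⥤ ((truncation 2).obj S).HomotopyCategory₂ := Paths.lift
    { obj := fun x ↦ ⟨x⟩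
      map := fun e ↦ Truncated.HomotopyCategory₂.homMk (HoEdge.toEdge e) }
  have hF {x y : Simp S 0} (e : HoEdge S x y) :
      F.map ((Paths.of _).map (edgeArrow e)) = Truncated.HomotopyCategory₂.homMk e.toEdge :=
    Paths.lift_toPath _ _
  CategoryTheory.Quotient.lift (HoRel S) F (by
    rintro _ _ _ _ (⟨τ, x, y, z, e₀₁, e₁₂, e₀₂, h₂, h₀, h₁⟩ | ⟨x, e, he⟩)
    · rw [Functor.map_comp, hF, hF, hF]
      exact Truncated.Edge.CompStruct.homotopyCategory₂_fac
        (Edge.CompStruct.mk (e₀₁ := e₀₁.toEdge) (e₁₂ := e₁₂.toEdge) (e₀₂ := e₀₂.toEdge) τ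
          h₂.symm h₀.symm h₁.symm)
    · rw [F.map_id, hF]
      exact (congrArg Truncated.HomotopyCategory₂.homMk (Edge.ext he : e.toEdge = Edge.id x)).trans
        (Truncated.HomotopyCategory₂.homMk_id _))

lemma toHomotopyCategory₂_map_homOfEdge {x y : Simp S 0} (e : Simp S 1) (h₁ : δ S 1 e = x)
    (h₀ : δ S 0 e = y) :
    toHomotopyCategory₂.map (homOfEdge e h₁ h₀) =
      Truncated.HomotopyCategory₂.homMk (Edge.mk e h₁ h₀ : Edge x y) :=
  Paths.lift_toPath _ _

lemma exists_simplex_of_homOfEdge_eq {x y : Simp S 0} {e e' : Simp S 1} {h₁ : δ S 1 e = x}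
    {h₀ : δ S 0 e = y} {h₁' : δ S 1 e' = x} {h₀' : δ S 0 e' = y}
    (h : homOfEdge e h₁ h₀ = homOfEdge e' h₁' h₀') :
    ∃ τ : Simp S 2, δ S 2 τ = e ∧ δ S 1 τ = e' ∧ δ S 0 τ = σ S 0 y := by
  have h' := congrArg toHomotopyCategory₂.map h
  rw [toHomotopyCategory₂_map_homOfEdge, toHomotopyCategory₂_map_homOfEdge] at h'
  obtain ⟨s⟩ := Quotient.exact h'
  exact ⟨s.simplex, s.d₂, s.d₁, s.d₀⟩

end HoCat

/-- For a quasicategory `S`: (a) every morphism of the homotopy category `Ho S` between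
(the classes of) vertices `x` and `y` is the class of a `1`-simplex `e` with `δ₁ e = x` and
`δ₀ e = y`; and (b) if two `1`-simplices `e, e'` from `x` to `y` induce the same morphism of
`Ho S`, then there is a `2`-simplex `τ` with `δ₂ τ = e`, `δ₁ τ = e'` and `δ₀ τ = σ₀ y`,
i.e. `e` and `e'` are homotopic. -/
theorem quasicategory_hoCat_hom_repr (S : SSet.{u}) [SSet.Quasicategory S] :
    (∀ (x y : Simp S 0)
      (φ : (Quotient.functor (HoRel S)).obj ((Paths.of (HoVert S)).obj (vert S x)) ⟶
        (Quotient.functor (HoRel S)).obj ((Paths.of (HoVert S)).obj (vert S y))),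
      ∃ (e : Simp S 1) (h₁ : δ S 1 e = x) (h₀ : δ S 0 e = y), homOfEdge e h₁ h₀ = φ) ∧
    (∀ (x y : Simp S 0) (e e' : Simp S 1)
      (h₁ : δ S 1 e = x) (h₀ : δ S 0 e = y) (h₁' : δ S 1 e' = x) (h₀' : δ S 0 e' = y),
      homOfEdge e h₁ h₀ = homOfEdge e' h₁' h₀' →
      ∃ τ : Simp S 2, δ S 2 τ = e ∧ δ S 1 τ = e' ∧ δ S 0 τ = σ S 0 y) :=
  ⟨fun _ _ φ ↦ exists_homOfEdge_eq φ, fun _ _ _ _ _ _ _ _ h ↦ exists_simplex_of_homOfEdge_eq h⟩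
end

section
/- Let m and m′ be zigzag words of lengths p and q respectively. In the category Cat of (small) categories, the square whose top-left corner is the terminal category pt, whose top map pt ⥤ Z(m′) picks out the vertex 0 of Z(m′), whose left map pt ⥤ Z(m) picks out the vertex p of Z(m), whose right map is the inclusion ι′ : Z(m′) ⥤ Z(m ++ m′) (induced by the vertex map k ↦ p + k), and whose bottom map is the inclusion ι : Z(m) ⥤ Z(m ++ m′) (induced by the vertex map k ↦ k), is a pushout square (CategoryTheory.IsPushout). That is, the zigzag category of a concatenation of zigzag words is the pushout of the two zigzag categories glued along the common endpoint. -/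
open CategoryTheory

/-- The two symbols of which zigzag words are composed: `A` ("any arbitrary arrow") and
`W` ("backward weak equivalence"). -/
inductive ZigSym : Type
  | A : ZigSym
  | W : ZigSym
  deriving DecidableEq

/-- A zigzag word is a list of symbols. -/
abbrev ZigzagWord : Type := List ZigSym

/-- The vertices of the zigzag quiver of a word `m`: `0, 1, …, m.length`. -/
def ZigVert (m : ZigzagWord) : Type := Fin (m.length + 1)

/-- A vertex of the zigzag quiver. -/
def ZigVert.mk (m : ZigzagWord) (k : Fin (m.length + 1)) : ZigVert m := k

/-- The underlying natural number of a vertex. -/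
def ZigVert.toNat {m : ZigzagWord} (a : ZigVert m) : ℕ :=
  (show Fin (m.length + 1) from a).val

/-- There is exactly one arrow `(k-1) ⟶ k` for each `k` with `t k = A`, and exactly one
arrow `k ⟶ (k-1)` for each `k` with `t k = W` (in `1`-indexed notation). -/
def ZigHomP (m : ZigzagWord) (a b : ZigVert m) : Prop :=
  ∃ (k : ℕ) (hk : k < m.length),
    (m[k]'hk = ZigSym.A ∧ a.toNat = k ∧ b.toNat = k + 1) ∨
    (m[k]'hk = ZigSym.W ∧ a.toNat = k + 1 ∧ b.toNat = k)

instance (m : ZigzagWord) : Quiver.{0} (ZigVert m) :=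
  ⟨fun a b => PLift (ZigHomP m a b)⟩

/-- The zigzag category `Z(m)` of a zigzag word `m`: the free category on the zigzag
quiver of `m`. -/
abbrev ZigCat (m : ZigzagWord) : Type := Paths (ZigVert m)

/-- The vertex `0` (the source). -/
def zigSource (m : ZigzagWord) : ZigVert m := ZigVert.mk m 0

/-- The vertex `p = m.length` (the target). -/
def zigTarget (m : ZigzagWord) : ZigVert m := ZigVert.mk m (Fin.last m.length)

/-- The prefunctor `ZigVert m ⥤q ZigVert (m ++ m')` induced by the vertex map `k ↦ k`. -/
def zigIncl₁Prefunctor (m m' : ZigzagWord) : ZigVert m ⥤q ZigVert (m ++ m') where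
  obj a := ZigVert.mk _ ⟨a.toNat, by
    have : a.toNat < m.length + 1 := (show Fin (m.length + 1) from a).isLt
    simp only [List.length_append]
    omega⟩
  map {a b} e := PLift.up (by
    obtain ⟨k, hk, h⟩ := e.down
    refine ⟨k, by simp only [List.length_append]; omega, ?_⟩
    have hget : (m ++ m')[k]'(by simp only [List.length_append]; omega) = m[k]'hk :=
      List.getElem_append_left hk
    rcases h with ⟨hA, ha, hb⟩ | ⟨hW, ha, hb⟩
    · exact Or.inl ⟨hget.trans hA, by simpa [ZigVert.toNat, ZigVert.mk] using ha,
        by simpa [ZigVert.toNat, ZigVert.mk] using hb⟩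
    · exact Or.inr ⟨hget.trans hW, by simpa [ZigVert.toNat, ZigVert.mk] using ha,
        by simpa [ZigVert.toNat, ZigVert.mk] using hb⟩)

/-- The prefunctor `ZigVert m' ⥤q ZigVert (m ++ m')` induced by the vertex map
`k ↦ m.length + k`. -/
def zigIncl₂Prefunctor (m m' : ZigzagWord) : ZigVert m' ⥤q ZigVert (m ++ m') where
  obj a := ZigVert.mk _ ⟨m.length + a.toNat, by
    have : a.toNat < m'.length + 1 := (show Fin (m'.length + 1) from a).isLt
    simp only [List.length_append]
    omega⟩
  map {a b} e := PLift.up (by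
    obtain ⟨k, hk, h⟩ := e.down
    refine ⟨m.length + k, by simp only [List.length_append]; omega, ?_⟩
    have hget : (m ++ m')[m.length + k]'(by simp only [List.length_append]; omega) =
        m'[k]'hk := by
      have := List.getElem_append_right (as := m) (bs := m') (i := m.length + k)
        (Nat.le_add_right _ _) (h₂ := by simp only [List.length_append]; omega)
      simpa using this
    rcases h with ⟨hA, ha, hb⟩ | ⟨hW, ha, hb⟩
    · exact Or.inl ⟨hget.trans hA, by simp [ZigVert.toNat, ZigVert.mk] at ha ⊢; omega,
        by simp [ZigVert.toNat, ZigVert.mk] at hb ⊢; omega⟩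
    · exact Or.inr ⟨hget.trans hW, by simp [ZigVert.toNat, ZigVert.mk] at ha ⊢; omega,
        by simp [ZigVert.toNat, ZigVert.mk] at hb ⊢; omega⟩)

/-- The functor `ι : Z(m) ⥤ Z(m ++ m')` induced by the vertex map `k ↦ k`. -/
def zigIncl₁ (m m' : ZigzagWord) : ZigCat m ⥤ ZigCat (m ++ m') :=
  Paths.lift ((zigIncl₁Prefunctor m m').comp (Paths.of _))

/-- The functor `ι' : Z(m') ⥤ Z(m ++ m')` induced by the vertex map `k ↦ m.length + k`. -/
def zigIncl₂ (m m' : ZigzagWord) : ZigCat m' ⥤ ZigCat (m ++ m') :=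
  Paths.lift ((zigIncl₂Prefunctor m m').comp (Paths.of _))

/-!
A functor out of the free category `Z(m ++ m')` is the same as a prefunctor on its quiver. With
`p = m.length`, the vertices `k ≤ p` form the image of `ι` and the vertices `k ≥ p` that of `ι'`,
the two images sharing only the vertex `p`; an arrow joins consecutive vertices, so it lies in one
of the images. Hence functors out of `Z(m ++ m')` are determined by their restrictions along `ι`
and `ι'`, and two functors out of `Z(m)` and `Z(m')` that agree at the shared vertex glue, by cases
on `k ≤ p`, to a functor out of `Z(m ++ m')`. Arrows of the zigzag quivers are proofs, hence
unique between given endpoints, which reduces all transport of arrows to equalities of endpoints.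
-/

namespace CategoryTheory.Paths

variable {V : Type*} [Quiver V] [∀ a b : V, Subsingleton (a ⟶ b)] {C : Type*} [Category C]

lemma map_toPath_congr_eqToHom (F : Paths V ⥤ C) {a b a' b' : V} (ha : a = a') (hb : b = b')
    (e : a ⟶ b) (e' : a' ⟶ b') {X Y : C} (p₁ : X = F.obj a) (p₂ : F.obj b = Y)
    (q₁ : X = F.obj a') (q₂ : F.obj b' = Y) :
    eqToHom p₁ ≫ F.map e.toPath ≫ eqToHom p₂ = eqToHom q₁ ≫ F.map e'.toPath ≫ eqToHom q₂ := by
  subst ha hb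
  obtain rfl := Subsingleton.elim e e'
  rfl

lemma ext_functor_of_jointly_surjective {W₁ W₂ : Type*} [Quiver W₁] [Quiver W₂]
    (φ₁ : W₁ ⥤q V) (φ₂ : W₂ ⥤q V)
    (hobj : ∀ x : V, (∃ a, φ₁.obj a = x) ∨ ∃ a, φ₂.obj a = x)
    (hmap : ∀ x y : V, (x ⟶ y) →
      (∃ a b : W₁, Nonempty (a ⟶ b) ∧ φ₁.obj a = x ∧ φ₁.obj b = y) ∨
        ∃ a b : W₂, Nonempty (a ⟶ b) ∧ φ₂.obj a = x ∧ φ₂.obj b = y)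
    {F G : Paths V ⥤ C}
    (h₁ : lift (φ₁ ⋙q of V) ⋙ F = lift (φ₁ ⋙q of V) ⋙ G)
    (h₂ : lift (φ₂ ⋙q of V) ⋙ F = lift (φ₂ ⋙q of V) ⋙ G) : F = G := by
  refine ext_functor (funext fun x => ?_) fun x y e => ?_
  · obtain ⟨a, rfl⟩ | ⟨a, rfl⟩ := hobj x
    exacts [Functor.congr_obj h₁ a, Functor.congr_obj h₂ a]
  · obtain ⟨a, b, ⟨e'⟩, rfl, rfl⟩ | ⟨a, b, ⟨e'⟩, rfl, rfl⟩ := hmap x y e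
    · obtain rfl := Subsingleton.elim e (φ₁.map e')
      exact Functor.congr_hom h₁ e'.toPath
    · obtain rfl := Subsingleton.elim e (φ₂.map e')
      exact Functor.congr_hom h₂ e'.toPath

end CategoryTheory.Paths

namespace ZigVert

variable {m m' : ZigzagWord}

@[ext]
lemma ext {x y : ZigVert m} (h : x.toNat = y.toNat) : x = y :=
  Fin.ext h

lemma toNat_lt (x : ZigVert m) : x.toNat < m.length + 1 :=
  (show Fin (m.length + 1) from x).isLt

lemma toNat_lt_append (x : ZigVert (m ++ m')) : x.toNat < m.length + m'.length + 1 := by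
  simpa using x.toNat_lt

def toLeft (x : ZigVert (m ++ m')) (hx : x.toNat ≤ m.length) : ZigVert m :=
  ZigVert.mk m ⟨x.toNat, by omega⟩

/-- Truncated subtraction: this is the vertex `0` of `Z(m')` when `x.toNat < m.length`. -/
def toRight (x : ZigVert (m ++ m')) : ZigVert m' :=
  ZigVert.mk m' ⟨x.toNat - m.length, by have := x.toNat_lt_append; omega⟩

@[simp]
lemma toNat_toLeft (x : ZigVert (m ++ m')) (hx : x.toNat ≤ m.length) :
    (x.toLeft hx).toNat = x.toNat :=
  rfl

@[simp]
lemma toNat_toRight (x : ZigVert (m ++ m')) : x.toRight.toNat = x.toNat - m.length :=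
  rfl

end ZigVert

@[simp]
lemma zigSource_toNat (m : ZigzagWord) : (zigSource m).toNat = 0 :=
  rfl

@[simp]
lemma zigTarget_toNat (m : ZigzagWord) : (zigTarget m).toNat = m.length :=
  rfl

instance (m : ZigzagWord) (a b : ZigVert m) : Subsingleton (a ⟶ b) :=
  inferInstanceAs (Subsingleton (PLift _))

def ZigHomP.toHom {m : ZigzagWord} {a b : ZigVert m} (h : ZigHomP m a b) : a ⟶ b :=
  PLift.up h

lemma ZigHomP.toNat_ne {m : ZigzagWord} {a b : ZigVert m} (h : ZigHomP m a b) :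
    a.toNat ≠ b.toNat := by
  obtain ⟨k, -, ⟨-, ha, hb⟩ | ⟨-, ha, hb⟩⟩ := h <;> omega

section Append

variable {m m' : ZigzagWord}

@[simp]
lemma zigIncl₁Prefunctor_obj_toNat (a : ZigVert m) :
    ((zigIncl₁Prefunctor m m').obj a).toNat = a.toNat :=
  rfl

@[simp]
lemma zigIncl₂Prefunctor_obj_toNat (a : ZigVert m') :
    ((zigIncl₂Prefunctor m m').obj a).toNat = m.length + a.toNat :=
  rfl

lemma zigIncl₁_map_toPath {a b : ZigVert m} (e : a ⟶ b) :
    (zigIncl₁ m m').map e.toPath = ((zigIncl₁Prefunctor m m').map e).toPath :=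
  Paths.lift_toPath _ _

lemma zigIncl₂_map_toPath {a b : ZigVert m'} (e : a ⟶ b) :
    (zigIncl₂ m m').map e.toPath = ((zigIncl₂Prefunctor m m').map e).toPath :=
  Paths.lift_toPath _ _

lemma zigIncl₁Prefunctor_obj_toNat_le (a : ZigVert m) :
    ((zigIncl₁Prefunctor m m').obj a).toNat ≤ m.length :=
  Nat.le_of_lt_succ a.toNat_lt

lemma le_zigIncl₂Prefunctor_obj_toNat (a : ZigVert m') :
    m.length ≤ ((zigIncl₂Prefunctor m m').obj a).toNat :=
  Nat.le_add_right _ _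

lemma zigIncl₁Prefunctor_obj_toLeft (x : ZigVert (m ++ m')) (hx : x.toNat ≤ m.length) :
    (zigIncl₁Prefunctor m m').obj (x.toLeft hx) = x :=
  rfl

lemma zigIncl₂Prefunctor_obj_toRight {x : ZigVert (m ++ m')} (hx : m.length ≤ x.toNat) :
    (zigIncl₂Prefunctor m m').obj x.toRight = x := by
  ext
  simp only [zigIncl₂Prefunctor_obj_toNat, ZigVert.toNat_toRight]
  omega

@[simp]
lemma toRight_zigIncl₂Prefunctor_obj (a : ZigVert m') :
    ((zigIncl₂Prefunctor m m').obj a).toRight = a := by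
  ext; simp

lemma ZigVert.toLeft_eq_zigTarget {x : ZigVert (m ++ m')} (hx : x.toNat = m.length) :
    x.toLeft hx.le = zigTarget m := by
  ext; simpa using hx

lemma ZigVert.toRight_eq_zigSource {x : ZigVert (m ++ m')} (hx : x.toNat = m.length) :
    x.toRight = zigSource m' := by
  ext; simp [hx]

namespace ZigHomP

variable {x y : ZigVert (m ++ m')}

lemma le_or_ge (h : ZigHomP (m ++ m') x y) :
    (x.toNat ≤ m.length ∧ y.toNat ≤ m.length) ∨ (m.length ≤ x.toNat ∧ m.length ≤ y.toNat) := by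
  obtain ⟨k, -, ⟨-, hx, hy⟩ | ⟨-, hx, hy⟩⟩ := h <;> omega

lemma toLeft (h : ZigHomP (m ++ m') x y) (hx : x.toNat ≤ m.length) (hy : y.toNat ≤ m.length) :
    ZigHomP m (x.toLeft hx) (y.toLeft hy) := by
  obtain ⟨k, hk, h⟩ := h
  have hkm : k < m.length := by rcases h with ⟨-, h₁, h₂⟩ | ⟨-, h₁, h₂⟩ <;> omega
  rw [List.getElem_append_left hkm] at h
  exact ⟨k, hkm, h⟩

lemma toRight (h : ZigHomP (m ++ m') x y) (hx : m.length ≤ x.toNat) (hy : m.length ≤ y.toNat) :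
    ZigHomP m' x.toRight y.toRight := by
  obtain ⟨k, hk, h⟩ := h
  have hkm : m.length ≤ k := by rcases h with ⟨-, h₁, h₂⟩ | ⟨-, h₁, h₂⟩ <;> omega
  rw [List.getElem_append_right hkm] at h
  refine ⟨k - m.length, by simp only [List.length_append] at hk; omega, ?_⟩
  simp only [ZigVert.toNat_toRight]
  rcases h with ⟨hA, h₁, h₂⟩ | ⟨hW, h₁, h₂⟩
  · exact .inl ⟨hA, by omega, by omega⟩
  · exact .inr ⟨hW, by omega, by omega⟩

end ZigHomP

end Append

section Desc

variable {m m' : ZigzagWord} {C : Type*} [Category C]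

def zigAppendDescObj (F : ZigCat m' ⥤ C) (G : ZigCat m ⥤ C) (x : ZigVert (m ++ m')) : C :=
  if hx : x.toNat ≤ m.length then G.obj (x.toLeft hx) else F.obj x.toRight

lemma zigAppendDescObj_of_le (F : ZigCat m' ⥤ C) (G : ZigCat m ⥤ C) {x : ZigVert (m ++ m')}
    (hx : x.toNat ≤ m.length) : zigAppendDescObj F G x = G.obj (x.toLeft hx) :=
  dif_pos hx

variable {F : ZigCat m' ⥤ C} {G : ZigCat m ⥤ C}

lemma zigAppendDescObj_of_ge (h : F.obj (zigSource m') = G.obj (zigTarget m))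
    {x : ZigVert (m ++ m')} (hx : m.length ≤ x.toNat) :
    zigAppendDescObj F G x = F.obj x.toRight := by
  by_cases hx' : x.toNat ≤ m.length
  · have hp : x.toNat = m.length := le_antisymm hx' hx
    rw [zigAppendDescObj_of_le F G hx', ZigVert.toLeft_eq_zigTarget hp,
      ZigVert.toRight_eq_zigSource hp, h]
  · exact dif_neg hx'

variable (h : F.obj (zigSource m') = G.obj (zigTarget m))

def zigAppendDescPrefunctor : ZigVert (m ++ m') ⥤q C where
  obj := zigAppendDescObj F G
  map {x y} e :=
    if hxy : x.toNat ≤ m.length ∧ y.toNat ≤ m.length then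
      eqToHom (zigAppendDescObj_of_le F G hxy.1) ≫
        G.map (e.down.toLeft hxy.1 hxy.2).toHom.toPath ≫
        eqToHom (zigAppendDescObj_of_le F G hxy.2).symm
    else
      have hge := e.down.le_or_ge.resolve_left hxy
      eqToHom (zigAppendDescObj_of_ge h hge.1) ≫
        F.map (e.down.toRight hge.1 hge.2).toHom.toPath ≫
        eqToHom (zigAppendDescObj_of_ge h hge.2).symm

def zigAppendDesc : ZigCat (m ++ m') ⥤ C :=
  Paths.lift (zigAppendDescPrefunctor h)

lemma zigAppendDesc_map_toPath {x y : ZigVert (m ++ m')} (e : x ⟶ y) :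
    (zigAppendDesc h).map e.toPath = (zigAppendDescPrefunctor h).map e :=
  Paths.lift_toPath _ _

lemma zigIncl₁_comp_zigAppendDesc : zigIncl₁ m m' ⋙ zigAppendDesc h = G := by
  refine Paths.ext_functor
    (funext fun a => zigAppendDescObj_of_le F G (zigIncl₁Prefunctor_obj_toNat_le a)) fun a b e => ?_
  have hab : ((zigIncl₁Prefunctor m m').obj a).toNat ≤ m.length ∧
      ((zigIncl₁Prefunctor m m').obj b).toNat ≤ m.length :=
    ⟨zigIncl₁Prefunctor_obj_toNat_le a, zigIncl₁Prefunctor_obj_toNat_le b⟩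
  exact (congrArg (zigAppendDesc h).map (zigIncl₁_map_toPath e)).trans
    ((zigAppendDesc_map_toPath h _).trans (dif_pos hab))

lemma zigIncl₂_comp_zigAppendDesc : zigIncl₂ m m' ⋙ zigAppendDesc h = F := by
  refine Paths.ext_functor
    (funext fun a => (zigAppendDescObj_of_ge h (le_zigIncl₂Prefunctor_obj_toNat a)).trans
      (congrArg F.obj (toRight_zigIncl₂Prefunctor_obj a)))
    fun a b e => ?_
  have hab : ¬ (((zigIncl₂Prefunctor m m').obj a).toNat ≤ m.length ∧
      ((zigIncl₂Prefunctor m m').obj b).toNat ≤ m.length) := by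
    have := e.down.toNat_ne
    simp only [zigIncl₂Prefunctor_obj_toNat]
    omega
  refine (congrArg (zigAppendDesc h).map (zigIncl₂_map_toPath e)).trans
    ((zigAppendDesc_map_toPath h _).trans ((dif_neg hab).trans ?_))
  exact Paths.map_toPath_congr_eqToHom F (toRight_zigIncl₂Prefunctor_obj a)
    (toRight_zigIncl₂Prefunctor_obj b) _ _ _ _ _ _

end Desc

lemma zigCat_append_functor_ext {m m' : ZigzagWord} {C : Type*} [Category C]
    {F G : ZigCat (m ++ m') ⥤ C}
    (h₁ : zigIncl₁ m m' ⋙ F = zigIncl₁ m m' ⋙ G) (h₂ : zigIncl₂ m m' ⋙ F = zigIncl₂ m m' ⋙ G) :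
    F = G := by
  refine Paths.ext_functor_of_jointly_surjective _ _ (fun x => ?_) (fun x y e => ?_) h₁ h₂
  · by_cases hx : x.toNat ≤ m.length
    · exact .inl ⟨_, zigIncl₁Prefunctor_obj_toLeft x hx⟩
    · exact .inr ⟨_, zigIncl₂Prefunctor_obj_toRight (by omega)⟩
  · refine e.down.le_or_ge.imp (fun hxy => ?_) (fun hxy => ?_)
    · exact ⟨_, _, ⟨(e.down.toLeft hxy.1 hxy.2).toHom⟩, rfl, rfl⟩
    · exact ⟨_, _, ⟨(e.down.toRight hxy.1 hxy.2).toHom⟩,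
        zigIncl₂Prefunctor_obj_toRight hxy.1, zigIncl₂Prefunctor_obj_toRight hxy.2⟩

lemma zigIncl₂Prefunctor_obj_zigSource (m m' : ZigzagWord) :
    (zigIncl₂Prefunctor m m').obj (zigSource m') = (zigIncl₁Prefunctor m m').obj (zigTarget m) :=
  ZigVert.ext (by simp)

lemma zigCat_concat_commSq (m m' : ZigzagWord) :
    CommSq (C := Cat)
      ((Functor.const (Discrete PUnit)).obj ((Paths.of _).obj (zigSource m'))).toCatHom
      ((Functor.const (Discrete PUnit)).obj ((Paths.of _).obj (zigTarget m))).toCatHom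
      (zigIncl₂ m m').toCatHom (zigIncl₁ m m').toCatHom :=
  -- `Paths.lift` sends `𝟙` to `𝟙` definitionally, so `const X ⋙ ι` is `const (ι.obj X)`.
  ⟨Cat.ext (congrArg (fun X : ZigCat (m ++ m') => (Functor.const (Discrete PUnit)).obj X)
    (zigIncl₂Prefunctor_obj_zigSource m m'))⟩

/-- The zigzag category of a concatenation of zigzag words is the pushout, in the category
`Cat` of categories, of the two zigzag categories glued along the common endpoint: the square
whose top map picks out the vertex `0` of `Z(m')`, whose left map picks out the vertex
`p = m.length` of `Z(m)`, whose right map is `ι' : Z(m') ⥤ Z(m ++ m')` and whose bottom map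
is `ι : Z(m) ⥤ Z(m ++ m')`, is a pushout square. -/
theorem zigCat_concat_isPushout (m m' : ZigzagWord) :
    IsPushout
      (Z := Cat.of (Discrete PUnit)) (X := Cat.of (ZigCat m')) (Y := Cat.of (ZigCat m))
      (P := Cat.of (ZigCat (m ++ m')))
      ((Functor.const (Discrete PUnit)).obj ((Paths.of _).obj (zigSource m'))).toCatHom
      ((Functor.const (Discrete PUnit)).obj ((Paths.of _).obj (zigTarget m))).toCatHom
      (zigIncl₂ m m').toCatHom (zigIncl₁ m m').toCatHom := by
  have hsq := zigCat_concat_commSq m m'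
  refine IsPushout.of_isColimit' hsq (Limits.PushoutCocone.IsColimit.mk hsq.w
    (fun s =>
      (zigAppendDesc (Functor.congr_obj (congrArg Cat.Hom.toFunctor s.condition) ⟨⟨⟩⟩)).toCatHom)
    (fun s => Cat.ext (zigIncl₂_comp_zigAppendDesc _)) (fun s => Cat.ext (zigIncl₁_comp_zigAppendDesc _))
    fun s n h₂ h₁ => Cat.ext (zigCat_append_functor_ext
      ((congrArg Cat.Hom.toFunctor h₁).trans (zigIncl₁_comp_zigAppendDesc _).symm)
      ((congrArg Cat.Hom.toFunctor h₂).trans (zigIncl₂_comp_zigAppendDesc _).symm)))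
end

section
/- Let R be a category, W a multiplicative class of morphisms of R with associated wide subcategory 𝒲, x and y objects of R, and m = (t 1, …, t p) a zigzag word of length p ≥ 1. Then: (i) if t p = A, the evaluation-at-vertex-p functor Fun_s(m, R; x) ⥤ 𝒲 is a Grothendieck opfibration (i.e., the induced functor on opposite categories is a Grothendieck fibration in the sense of Mathlib's CategoryTheory.Functor.IsFibered); (ii) if t p = W, the evaluation-at-vertex-p functor Fun_s(m, R; x) ⥤ 𝒲 is a Grothendieck fibration; (iii) if t 1 = W, the evaluation-at-vertex-0 functor Fun_t(m, R; y) ⥤ 𝒲 is a Grothendieck opfibration; and (iv) if t 1 = A, the evaluation-at-vertex-0 functor Fun_t(m, R; y) ⥤ 𝒲 is a Grothendieck fibration. -/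
open CategoryTheory

universe v u

variable {R : Type u} [Category.{v} R]

/-- The generating arrow `e : a ⟶ b` is one of the backward ("weak equivalence") arrows
`k ⟶ (k-1)` corresponding to a letter `W` of the word `m`. -/
def IsWArrow (m : ZigzagWord) {a b : ZigVert m} (_ : a ⟶ b) : Prop :=
  ∃ (k : ℕ) (hk : k < m.length),
    m[k]'hk = ZigSym.W ∧ a.toNat = k + 1 ∧ b.toNat = k

/-- A functor `T : Z(m) ⥤ R` is a relative functor of type `m` if it sends each generating
arrow corresponding to a letter `W` of `m` to a morphism lying in `W`. -/
def IsRelFunctor (m : ZigzagWord) (W : MorphismProperty R) (T : ZigCat m ⥤ R) : Prop :=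
  ∀ ⦃a b : ZigVert m⦄ (e : a ⟶ b), IsWArrow m e → W (T.map ((Paths.of _).map e))

/-- The wide subcategory `𝒲` of `R` associated to a multiplicative class `W` of morphisms:
same objects, and morphisms those of `R` lying in `W`. -/
def WideSub (W : MorphismProperty R) : Type u := R

/-- An object of `R`, seen in the wide subcategory. -/
def WideSub.mk (W : MorphismProperty R) (r : R) : WideSub W := r

instance (W : MorphismProperty R) [W.IsMultiplicative] : Category.{v} (WideSub W) where
  Hom a b := { f : (show R from a) ⟶ (show R from b) // W f }
  id a := ⟨𝟙 _, W.id_mem _⟩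
  comp f g := ⟨f.1 ≫ g.1, W.comp_mem _ _ f.2 g.2⟩
  id_comp f := Subtype.ext (Category.id_comp f.1)
  comp_id f := Subtype.ext (Category.comp_id f.1)
  assoc f g h := Subtype.ext (Category.assoc f.1 g.1 h.1)

/-- The category `Fun_s(m, R; x)`: objects are the relative functors `T` of type `m` with
`T(0) = x`. -/
structure FunS (m : ZigzagWord) (W : MorphismProperty R) (x : R) : Type max u v where
  T : ZigCat m ⥤ R
  rel : IsRelFunctor m W T
  hx : T.obj ((Paths.of _).obj (zigSource m)) = x

/-- Morphisms of `Fun_s(m, R; x)`: natural transformations all of whose components lie in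
`W` and whose component at the vertex `0` is the identity of `x`. -/
structure FunS.Hom {m : ZigzagWord} {W : MorphismProperty R} {x : R}
    (X Y : FunS m W x) : Type v where
  η : X.T ⟶ Y.T
  mem : ∀ v : ZigCat m, W (η.app v)
  h₀ : η.app ((Paths.of _).obj (zigSource m)) = eqToHom (X.hx.trans Y.hx.symm)

theorem FunS.Hom.ext' {m : ZigzagWord} {W : MorphismProperty R} {x : R} {X Y : FunS m W x}
    {f g : FunS.Hom X Y} (h : f.η = g.η) : f = g := by
  cases f; cases g; cases h; rfl

instance {m : ZigzagWord} (W : MorphismProperty R) [W.IsMultiplicative] (x : R) :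
    Category.{v} (FunS m W x) where
  Hom X Y := FunS.Hom X Y
  id X := { η := 𝟙 X.T, mem := fun v => W.id_mem _, h₀ := by simp }
  comp f g :=
    { η := f.η ≫ g.η
      mem := fun v => W.comp_mem _ _ (f.mem v) (g.mem v)
      h₀ := by rw [NatTrans.comp_app, f.h₀, g.h₀, eqToHom_trans] }
  id_comp f := FunS.Hom.ext' (by simp)
  comp_id f := FunS.Hom.ext' (by simp)
  assoc f g h := FunS.Hom.ext' (by simp)

/-- The category `Fun_t(m, R; y)`: objects are the relative functors `T` of type `m` with
`T(p) = y`. -/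
structure FunT (m : ZigzagWord) (W : MorphismProperty R) (y : R) : Type max u v where
  T : ZigCat m ⥤ R
  rel : IsRelFunctor m W T
  hy : T.obj ((Paths.of _).obj (zigTarget m)) = y

/-- Morphisms of `Fun_t(m, R; y)`: natural transformations all of whose components lie in
`W` and whose component at the vertex `p` is the identity of `y`. -/
structure FunT.Hom {m : ZigzagWord} {W : MorphismProperty R} {y : R}
    (X Y : FunT m W y) : Type v where
  η : X.T ⟶ Y.T
  mem : ∀ v : ZigCat m, W (η.app v)
  hₚ : η.app ((Paths.of _).obj (zigTarget m)) = eqToHom (X.hy.trans Y.hy.symm)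

theorem FunT.Hom.ext' {m : ZigzagWord} {W : MorphismProperty R} {y : R} {X Y : FunT m W y}
    {f g : FunT.Hom X Y} (h : f.η = g.η) : f = g := by
  cases f; cases g; cases h; rfl

instance {m : ZigzagWord} (W : MorphismProperty R) [W.IsMultiplicative] (y : R) :
    Category.{v} (FunT m W y) where
  Hom X Y := FunT.Hom X Y
  id X := { η := 𝟙 X.T, mem := fun v => W.id_mem _, hₚ := by simp }
  comp f g :=
    { η := f.η ≫ g.η
      mem := fun v => W.comp_mem _ _ (f.mem v) (g.mem v)
      hₚ := by rw [NatTrans.comp_app, f.hₚ, g.hₚ, eqToHom_trans] }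
  id_comp f := FunT.Hom.ext' (by simp)
  comp_id f := FunT.Hom.ext' (by simp)
  assoc f g h := FunT.Hom.ext' (by simp)

/-- Evaluation at the vertex `p` on `Fun_s(m, R; x)`, as a functor to the wide
subcategory `𝒲`. -/
def evalTarget (m : ZigzagWord) (W : MorphismProperty R) [W.IsMultiplicative] (x : R) :
    FunS m W x ⥤ WideSub W where
  obj X := WideSub.mk W (X.T.obj ((Paths.of _).obj (zigTarget m)))
  map f := ⟨f.η.app ((Paths.of _).obj (zigTarget m)), f.mem _⟩
  map_id X := rfl
  map_comp f g := rfl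

/-- Evaluation at the vertex `0` on `Fun_t(m, R; y)`, as a functor to the wide
subcategory `𝒲`. -/
def evalSource (m : ZigzagWord) (W : MorphismProperty R) [W.IsMultiplicative] (y : R) :
    FunT m W y ⥤ WideSub W where
  obj X := WideSub.mk W (X.T.obj ((Paths.of _).obj (zigSource m)))
  map f := ⟨f.η.app ((Paths.of _).obj (zigSource m)), f.mem _⟩
  map_id X := rfl
  map_comp f g := rfl

/-!
When the last letter of `m` is `W`, no generating arrow of `Z(m)` ends at the vertex `p`. A
relative functor `T` can then be modified at `p` alone: replacing `T(p)` by `S` and precomposing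
the arrows out of `p` with `w : S ⟶ T(p)` gives a relative functor `T'` with a map `T' ⟶ T` that
is `w` at `p` and the identity elsewhere. A map `T'' ⟶ T` whose component at `p` factors through
`w` factors uniquely through `T'`, because the factorization is forced at `p` and the identity
elsewhere; so `T' ⟶ T` is a strongly cartesian lift of `w`. When the last letter is `A`, no arrow
starts at `p`, and postcomposing the arrows into `p` gives strongly cocartesian lifts instead.
The same constructions at the vertex `0` handle `Fun_t(m, R; y)`.
-/

namespace CategoryTheory

variable {𝒮 𝒳 : Type*} [Category 𝒮] [Category 𝒳] {p : 𝒳 ⥤ 𝒮}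

namespace IsHomLift

lemma op {R S : 𝒮} {a b : 𝒳} (f : R ⟶ S) (φ : a ⟶ b) [p.IsHomLift f φ] :
    p.op.IsHomLift f.op φ.op := by
  cases ‹p.IsHomLift f φ›
  exact IsHomLift.map p.op φ.op

lemma unop {R S : 𝒮ᵒᵖ} {a b : 𝒳ᵒᵖ} (f : R ⟶ S) (φ : a ⟶ b)
    [p.op.IsHomLift f φ] : p.IsHomLift f.unop φ.unop := by
  cases ‹p.op.IsHomLift f φ›
  exact IsHomLift.map p φ.unop

lemma map_eq_map {R S : 𝒮} {a b : 𝒳} (f : R ⟶ S) (φ ψ : a ⟶ b) [p.IsHomLift f φ]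
    [p.IsHomLift f ψ] : p.map φ = p.map ψ :=
  (IsHomLift.fac' p f φ).trans (IsHomLift.fac' p f ψ).symm

end IsHomLift

lemma Functor.IsStronglyCocartesian.op {R S : 𝒮} {a b : 𝒳} (f : R ⟶ S) (φ : a ⟶ b)
    [p.IsStronglyCocartesian f φ] : p.op.IsStronglyCartesian f.op φ.op where
  toIsHomLift := IsHomLift.op f φ
  universal_property' {b'} g φ' _ := by
    have : p.IsHomLift (f ≫ g.unop) φ'.unop := IsHomLift.unop (g ≫ f.op) φ'
    obtain ⟨χ, ⟨_, hfac⟩, huniq⟩ :=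
      IsStronglyCocartesian.universal_property' (p := p) (f := f) (φ := φ) g.unop φ'.unop
    refine ⟨χ.op, ⟨IsHomLift.op g.unop χ, Quiver.Hom.unop_inj hfac⟩,
      fun χ' ⟨_, hχ'⟩ => ?_⟩
    have : p.IsHomLift g.unop χ'.unop := IsHomLift.unop g χ'
    exact Quiver.Hom.unop_inj (huniq χ'.unop ⟨this, congrArg Quiver.Hom.unop hχ'⟩)

lemma Functor.IsFibered.op_of_exists_isStronglyCocartesian
    (h : ∀ (a : 𝒳) (S : 𝒮) (f : p.obj a ⟶ S),
      ∃ (b : 𝒳) (φ : a ⟶ b), p.IsStronglyCocartesian f φ) :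
    p.op.IsFibered :=
  .of_exists_isStronglyCartesian fun a S f => by
    obtain ⟨b, φ, _⟩ := h a.unop S.unop f.unop
    exact ⟨Opposite.op b, φ.op, IsStronglyCocartesian.op f.unop φ⟩

end CategoryTheory

namespace CategoryTheory.Paths

open MorphismProperty

universe v₁ v₂ u₁ u₂

variable {V : Type u₁} [Quiver.{v₁} V] [DecidableEq (Paths V)]
  {C : Type u₂} [Category.{v₂} C]
  {W : MorphismProperty C} [W.IsMultiplicative]

abbrev replaceObj (T : Paths V ⥤ C) (u : Paths V) (S : C) (X : Paths V) : C :=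
  if X = u then S else T.obj X

/- `Paths V` does not unfold reducibly to `V`, so a vertex `v : V` is always fed to a functor on
`Paths V` as `(Paths.of V).obj v`, and a generating arrow as `(Paths.of V).map e`; otherwise the
terms are not well-typed for `rw`. -/

section Precomp

variable {T : Paths V ⥤ C} {u : Paths V} {S : C} (w : S ⟶ T.obj u)

def precompAtApp (X : Paths V) : replaceObj T u S X ⟶ T.obj X :=
  if h : X = u then eqToHom (if_pos h) ≫ w ≫ eqToHom (by rw [h])
  else eqToHom (if_neg h)

lemma precompAtApp_self : precompAtApp w u = eqToHom (if_pos rfl) ≫ w := by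
  simp [precompAtApp]

lemma precompAtApp_of_ne {X : Paths V} (h : X ≠ u) : precompAtApp w X = eqToHom (if_neg h) :=
  dif_neg h

lemma precompAtApp_mem {w : S ⟶ T.obj u} (hw : W w) (X : Paths V) : W (precompAtApp w X) := by
  unfold precompAtApp
  split
  · exact W.comp_mem _ _ (ContainsIdentities.eqToHom W _)
      (W.comp_mem _ _ hw (ContainsIdentities.eqToHom W _))
  · exact ContainsIdentities.eqToHom W _

variable (hu : ∀ {a b : V} (_ : a ⟶ b), (Paths.of V).obj b ≠ u)

def precompAtPrefunctor : V ⥤q C where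
  obj := replaceObj T u S
  map e :=
    precompAtApp w ((Paths.of V).obj _) ≫ T.map ((Paths.of V).map e) ≫
      eqToHom (if_neg (hu e)).symm

/-- Written out as a structure, rather than as `Paths.lift (precompAtPrefunctor w hu)`, so that
its objects unfold reducibly to `replaceObj T u S`. -/
abbrev precompAt : Paths V ⥤ C where
  obj := replaceObj T u S
  map f := (Paths.lift (precompAtPrefunctor w hu)).map f
  map_id := (Paths.lift (precompAtPrefunctor w hu)).map_id
  map_comp := (Paths.lift (precompAtPrefunctor w hu)).map_comp

lemma precompAt_obj_self : (precompAt w hu).obj u = S := if_pos rfl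

lemma precompAt_obj_of_ne {X : Paths V} (h : X ≠ u) : (precompAt w hu).obj X = T.obj X :=
  if_neg h

lemma precompAt_map_of {a b : V} (e : a ⟶ b) : (precompAt w hu).map ((Paths.of V).map e) =
    precompAtApp w _ ≫ T.map ((Paths.of V).map e) ≫ eqToHom (if_neg (hu e)).symm :=
  Paths.lift_toPath _ _

def precompAtπ : precompAt w hu ⟶ T :=
  Paths.liftNatTrans (fun v => precompAtApp w ((Paths.of V).obj v)) fun {a b} e => by
    change (precompAt w hu).map ((Paths.of V).map e) ≫ precompAtApp w ((Paths.of V).obj b) =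
      precompAtApp w ((Paths.of V).obj a) ≫ T.map ((Paths.of V).map e)
    rw [precompAt_map_of, precompAtApp_of_ne w (hu e)]
    simp only [Category.assoc, eqToHom_trans, eqToHom_refl, Category.comp_id]

lemma precompAtπ_app (X : Paths V) : (precompAtπ w hu).app X = precompAtApp w X := rfl

variable {w} {T' : Paths V ⥤ C} (ψ : T' ⟶ T) (g : T'.obj u ⟶ S)

def precompAtLiftApp (X : Paths V) : T'.obj X ⟶ replaceObj T u S X :=
  if h : X = u then eqToHom (by rw [h]) ≫ g ≫ eqToHom (if_pos h).symm
  else ψ.app X ≫ eqToHom (if_neg h).symm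

lemma precompAtLiftApp_self : precompAtLiftApp ψ g u = g ≫ eqToHom (if_pos rfl).symm := by
  simp [precompAtLiftApp]

lemma precompAtLiftApp_of_ne {X : Paths V} (h : X ≠ u) :
    precompAtLiftApp ψ g X = ψ.app X ≫ eqToHom (if_neg h).symm :=
  dif_neg h

variable {ψ g}

lemma precompAtLiftApp_mem (hg : W g) (hψ : ∀ X, W (ψ.app X)) (X : Paths V) :
    W (precompAtLiftApp ψ g X) := by
  unfold precompAtLiftApp
  split
  · exact W.comp_mem _ _ (ContainsIdentities.eqToHom W _)
      (W.comp_mem _ _ hg (ContainsIdentities.eqToHom W _))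
  · exact W.comp_mem _ _ (hψ X) (ContainsIdentities.eqToHom W _)

lemma precompAtLiftApp_comp_app (hg : ψ.app u = g ≫ w) (X : Paths V) :
    precompAtLiftApp ψ g X ≫ precompAtApp w X = ψ.app X := by
  by_cases h : X = u
  · subst h
    simp [precompAtLiftApp_self, precompAtApp_self, hg]
  · simp [precompAtLiftApp_of_ne ψ g h, precompAtApp_of_ne w h]

def precompAtLift (hg : ψ.app u = g ≫ w) : T' ⟶ precompAt w hu :=
  Paths.liftNatTrans (fun v => precompAtLiftApp ψ g ((Paths.of V).obj v)) fun {a b} e => by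
    change T'.map ((Paths.of V).map e) ≫ precompAtLiftApp ψ g ((Paths.of V).obj b) =
      precompAtLiftApp ψ g ((Paths.of V).obj a) ≫ (precompAt w hu).map ((Paths.of V).map e)
    rw [precompAt_map_of, precompAtLiftApp_of_ne ψ g (hu e),
      reassoc_of% precompAtLiftApp_comp_app hg, ψ.naturality_assoc]

lemma precompAtLift_comp_π (hg : ψ.app u = g ≫ w) :
    precompAtLift hu hg ≫ precompAtπ w hu = ψ := by
  ext X
  exact precompAtLiftApp_comp_app hg X

lemma precompAt_hom_ext {χ₁ χ₂ : T' ⟶ precompAt w hu} (hu' : χ₁.app u = χ₂.app u)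
    (hπ : χ₁ ≫ precompAtπ w hu = χ₂ ≫ precompAtπ w hu) : χ₁ = χ₂ := by
  ext X
  by_cases h : X = u
  · subst h; exact hu'
  · have := congrArg (fun χ => χ.app X) hπ
    simp only [NatTrans.comp_app, precompAtπ_app, precompAtApp_of_ne w h] at this
    exact (cancel_mono _).1 this

end Precomp

section Postcomp

variable {T : Paths V ⥤ C} {u : Paths V} {S : C} (w : T.obj u ⟶ S)

def postcompAtApp (X : Paths V) : T.obj X ⟶ replaceObj T u S X :=
  if h : X = u then eqToHom (by rw [h]) ≫ w ≫ eqToHom (if_pos h).symm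
  else eqToHom (if_neg h).symm

lemma postcompAtApp_self : postcompAtApp w u = w ≫ eqToHom (if_pos rfl).symm := by
  simp [postcompAtApp]

lemma postcompAtApp_of_ne {X : Paths V} (h : X ≠ u) :
    postcompAtApp w X = eqToHom (if_neg h).symm :=
  dif_neg h

lemma postcompAtApp_mem {w : T.obj u ⟶ S} (hw : W w) (X : Paths V) :
    W (postcompAtApp w X) := by
  unfold postcompAtApp
  split
  · exact W.comp_mem _ _ (ContainsIdentities.eqToHom W _)
      (W.comp_mem _ _ hw (ContainsIdentities.eqToHom W _))
  · exact ContainsIdentities.eqToHom W _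

variable (hu : ∀ {a b : V} (_ : a ⟶ b), (Paths.of V).obj a ≠ u)

def postcompAtPrefunctor : V ⥤q C where
  obj := replaceObj T u S
  map e :=
    eqToHom (if_neg (hu e)) ≫ T.map ((Paths.of V).map e) ≫ postcompAtApp w ((Paths.of V).obj _)

abbrev postcompAt : Paths V ⥤ C where
  obj := replaceObj T u S
  map f := (Paths.lift (postcompAtPrefunctor w hu)).map f
  map_id := (Paths.lift (postcompAtPrefunctor w hu)).map_id
  map_comp := (Paths.lift (postcompAtPrefunctor w hu)).map_comp

lemma postcompAt_obj_self : (postcompAt w hu).obj u = S := if_pos rfl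

lemma postcompAt_obj_of_ne {X : Paths V} (h : X ≠ u) : (postcompAt w hu).obj X = T.obj X :=
  if_neg h

lemma postcompAt_map_of {a b : V} (e : a ⟶ b) : (postcompAt w hu).map ((Paths.of V).map e) =
    eqToHom (if_neg (hu e)) ≫ T.map ((Paths.of V).map e) ≫ postcompAtApp w _ :=
  Paths.lift_toPath _ _

def postcompAtι : T ⟶ postcompAt w hu :=
  Paths.liftNatTrans (fun v => postcompAtApp w ((Paths.of V).obj v)) fun {a b} e => by
    change T.map ((Paths.of V).map e) ≫ postcompAtApp w ((Paths.of V).obj b) =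
      postcompAtApp w ((Paths.of V).obj a) ≫ (postcompAt w hu).map ((Paths.of V).map e)
    rw [postcompAt_map_of, postcompAtApp_of_ne w (hu e)]
    simp only [eqToHom_trans_assoc, eqToHom_refl, Category.id_comp]

lemma postcompAtι_app (X : Paths V) : (postcompAtι w hu).app X = postcompAtApp w X := rfl

variable {w} {T' : Paths V ⥤ C} (ψ : T ⟶ T') (g : S ⟶ T'.obj u)

def postcompAtDescApp (X : Paths V) : replaceObj T u S X ⟶ T'.obj X :=
  if h : X = u then eqToHom (if_pos h) ≫ g ≫ eqToHom (by rw [h])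
  else eqToHom (if_neg h) ≫ ψ.app X

lemma postcompAtDescApp_self : postcompAtDescApp ψ g u = eqToHom (if_pos rfl) ≫ g := by
  simp [postcompAtDescApp]

lemma postcompAtDescApp_of_ne {X : Paths V} (h : X ≠ u) :
    postcompAtDescApp ψ g X = eqToHom (if_neg h) ≫ ψ.app X :=
  dif_neg h

variable {ψ g}

lemma postcompAtDescApp_mem (hg : W g) (hψ : ∀ X, W (ψ.app X)) (X : Paths V) :
    W (postcompAtDescApp ψ g X) := by
  unfold postcompAtDescApp
  split
  · exact W.comp_mem _ _ (ContainsIdentities.eqToHom W _)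
      (W.comp_mem _ _ hg (ContainsIdentities.eqToHom W _))
  · exact W.comp_mem _ _ (ContainsIdentities.eqToHom W _) (hψ X)

lemma postcompAtApp_comp_descApp (hg : ψ.app u = w ≫ g) (X : Paths V) :
    postcompAtApp w X ≫ postcompAtDescApp ψ g X = ψ.app X := by
  by_cases h : X = u
  · subst h
    simp [postcompAtDescApp_self, postcompAtApp_self, hg]
  · simp [postcompAtDescApp_of_ne ψ g h, postcompAtApp_of_ne w h]

def postcompAtDesc (hg : ψ.app u = w ≫ g) : postcompAt w hu ⟶ T' :=
  Paths.liftNatTrans (fun v => postcompAtDescApp ψ g ((Paths.of V).obj v)) fun {a b} e => by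
    change (postcompAt w hu).map ((Paths.of V).map e) ≫
        postcompAtDescApp ψ g ((Paths.of V).obj b) =
      postcompAtDescApp ψ g ((Paths.of V).obj a) ≫ T'.map ((Paths.of V).map e)
    rw [postcompAt_map_of, postcompAtDescApp_of_ne ψ g (hu e), Category.assoc, Category.assoc,
      postcompAtApp_comp_descApp hg, ψ.naturality, Category.assoc]

lemma postcompAtι_comp_desc (hg : ψ.app u = w ≫ g) :
    postcompAtι w hu ≫ postcompAtDesc hu hg = ψ := by
  ext X
  exact postcompAtApp_comp_descApp hg X

lemma postcompAt_hom_ext {χ₁ χ₂ : postcompAt w hu ⟶ T'} (hu' : χ₁.app u = χ₂.app u)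
    (hι : postcompAtι w hu ≫ χ₁ = postcompAtι w hu ≫ χ₂) : χ₁ = χ₂ := by
  ext X
  by_cases h : X = u
  · subst h; exact hu'
  · have := congrArg (fun χ => χ.app X) hι
    simp only [NatTrans.comp_app, postcompAtι_app, postcompAtApp_of_ne w h] at this
    exact (cancel_epi _).1 this

end Postcomp

end CategoryTheory.Paths

open Paths

instance (m : ZigzagWord) : DecidableEq (ZigCat m) := inferInstanceAs (DecidableEq (Fin _))

section Zigzag

variable {m : ZigzagWord}

lemma ZigVert.toNat_eq_of_eq {a b : ZigVert m} (h : (Paths.of _).obj a = (Paths.of _).obj b) :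
    a.toNat = b.toNat :=
  congrArg ZigVert.toNat h

lemma zigSource_ne_zigTarget (hm : m ≠ []) :
    (Paths.of _).obj (zigSource m) ≠ (Paths.of _).obj (zigTarget m) := fun h => by
  have : 0 = m.length := ZigVert.toNat_eq_of_eq h
  exact hm (List.length_eq_zero_iff.mp this.symm)

variable (hm : m ≠ [])
include hm

lemma of_obj_ne_zigTarget_of_getLast_eq_W (hW : m.getLast hm = .W) :
    ∀ {a b : ZigVert m} (_ : a ⟶ b), (Paths.of _).obj b ≠ (Paths.of _).obj (zigTarget m) :=
  fun {a b} e hb => by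
  have hb : b.toNat = m.length := ZigVert.toNat_eq_of_eq hb
  rw [List.getLast_eq_getElem] at hW
  obtain ⟨k, hk, ⟨hA, -, hk'⟩ | ⟨-, -, hk'⟩⟩ := e.down
  · obtain rfl : k = m.length - 1 := by omega
    simp [hA] at hW
  · omega

lemma of_obj_ne_zigTarget_of_getLast_eq_A (hA : m.getLast hm = .A) :
    ∀ {a b : ZigVert m} (_ : a ⟶ b), (Paths.of _).obj a ≠ (Paths.of _).obj (zigTarget m) :=
  fun {a b} e ha => by
  have ha : a.toNat = m.length := ZigVert.toNat_eq_of_eq ha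
  rw [List.getLast_eq_getElem] at hA
  obtain ⟨k, hk, ⟨-, hk', -⟩ | ⟨hW, hk', -⟩⟩ := e.down
  · omega
  · obtain rfl : k = m.length - 1 := by omega
    simp [hW] at hA

lemma of_obj_ne_zigSource_of_head_eq_W (hW : m.head hm = .W) :
    ∀ {a b : ZigVert m} (_ : a ⟶ b), (Paths.of _).obj a ≠ (Paths.of _).obj (zigSource m) :=
  fun {a b} e ha => by
  have ha : a.toNat = 0 := ZigVert.toNat_eq_of_eq ha
  rw [List.head_eq_getElem] at hW
  obtain ⟨k, hk, ⟨hA, hk', -⟩ | ⟨-, hk', -⟩⟩ := e.down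
  · obtain rfl : k = 0 := by omega
    simp [hA] at hW
  · omega

lemma of_obj_ne_zigSource_of_head_eq_A (hA : m.head hm = .A) :
    ∀ {a b : ZigVert m} (_ : a ⟶ b), (Paths.of _).obj b ≠ (Paths.of _).obj (zigSource m) :=
  fun {a b} e hb => by
  have hb : b.toNat = 0 := ZigVert.toNat_eq_of_eq hb
  rw [List.head_eq_getElem] at hA
  obtain ⟨k, hk, ⟨-, -, hk'⟩ | ⟨hW, -, hk'⟩⟩ := e.down
  · omega
  · obtain rfl : k = 0 := by omega
    simp [hW] at hA

end Zigzag

section RelFunctor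

variable {m : ZigzagWord} {W : MorphismProperty R} [W.IsMultiplicative] {T : ZigCat m ⥤ R}
  {u : ZigCat m} {S : R}

lemma IsRelFunctor.precompAt (hT : IsRelFunctor m W T) {w : S ⟶ T.obj u} (hw : W w)
    (hu : ∀ {a b : ZigVert m} (_ : a ⟶ b), (Paths.of _).obj b ≠ u) :
    IsRelFunctor m W (precompAt w hu) := fun a b e he => by
  rw [precompAt_map_of]
  exact W.comp_mem _ _ (precompAtApp_mem hw _)
    (W.comp_mem _ _ (hT e he) (MorphismProperty.ContainsIdentities.eqToHom W _))

lemma IsRelFunctor.postcompAt (hT : IsRelFunctor m W T) {w : T.obj u ⟶ S} (hw : W w)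
    (hu : ∀ {a b : ZigVert m} (_ : a ⟶ b), (Paths.of _).obj a ≠ u) :
    IsRelFunctor m W (postcompAt w hu) := fun a b e he => by
  rw [postcompAt_map_of]
  exact W.comp_mem _ _ (MorphismProperty.ContainsIdentities.eqToHom W _)
    (W.comp_mem _ _ (hT e he) (postcompAtApp_mem hw _))

end RelFunctor

section WideSub

variable {W : MorphismProperty R} [W.IsMultiplicative]

lemma WideSub.eqToHom_val {a b : WideSub W} (h : a = b) :
    (eqToHom h).1 = eqToHom (show (show R from a) = (show R from b) from h) := by
  subst h; rfl

variable {E : Type*} [Category E] (p : E ⥤ WideSub W) {a b : E} {S : WideSub W}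

lemma WideSub.isHomLift_of_val_eq_eqToHom_comp (f : S ⟶ p.obj b) (φ : a ⟶ b)
    (ha : p.obj a = S) (h : (p.map φ).1 = (eqToHom ha).1 ≫ f.1) : p.IsHomLift f φ := by
  subst ha
  obtain rfl : p.map φ = f := Subtype.ext (h.trans (Category.id_comp _))
  infer_instance

lemma WideSub.isHomLift_of_val_eq_comp_eqToHom (g : p.obj a ⟶ S) (χ : a ⟶ b)
    (hb : p.obj b = S) (h : (p.map χ).1 = g.1 ≫ (eqToHom hb.symm).1) : p.IsHomLift g χ := by
  subst hb
  obtain rfl : p.map χ = g := Subtype.ext (h.trans (Category.comp_id _))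
  infer_instance

end WideSub

section Evaluation

variable (W : MorphismProperty R) [W.IsMultiplicative] {m : ZigzagWord}

lemma evalTarget_isFibered (x : R)
    (hu : ∀ {a b : ZigVert m} (_ : a ⟶ b),
      (Paths.of _).obj b ≠ (Paths.of _).obj (zigTarget m))
    (hc : (Paths.of _).obj (zigSource m) ≠ (Paths.of _).obj (zigTarget m)) :
    (evalTarget m W x).IsFibered := by
  refine .of_exists_isStronglyCartesian fun X S f => ?_
  let X' : FunS m W x :=
    ⟨precompAt f.1 hu, X.rel.precompAt f.2 hu, (precompAt_obj_of_ne _ _ hc).trans X.hx⟩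
  let φ : X' ⟶ X := ⟨precompAtπ f.1 hu, precompAtApp_mem f.2, precompAtApp_of_ne _ hc⟩
  have hX' : (evalTarget m W x).obj X' = S := precompAt_obj_self f.1 hu
  have : (evalTarget m W x).IsHomLift f φ :=
    WideSub.isHomLift_of_val_eq_eqToHom_comp _ _ _ hX'
      ((precompAtApp_self f.1).trans
        (congrArg (· ≫ f.1) (WideSub.eqToHom_val hX').symm))
  refine ⟨X', φ, ⟨fun {X''} g ψ _ => ?_⟩⟩
  have hψ : ψ.η.app _ = g.1 ≫ f.1 :=
    (congrArg Subtype.val (IsHomLift.eq_of_isHomLift (evalTarget m W x) (g ≫ f) ψ)).symm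
  let χ : X'' ⟶ X' :=
    ⟨precompAtLift hu hψ, precompAtLiftApp_mem g.2 ψ.mem,
      (precompAtLiftApp_of_ne ψ.η g.1 hc).trans (by rw [ψ.h₀, eqToHom_trans])⟩
  have : (evalTarget m W x).IsHomLift g χ :=
    WideSub.isHomLift_of_val_eq_comp_eqToHom _ _ _ hX'
      ((precompAtLiftApp_self ψ.η g.1).trans
        (congrArg (g.1 ≫ ·) (WideSub.eqToHom_val hX'.symm).symm))
  have hfac : χ ≫ φ = ψ := FunS.Hom.ext' (precompAtLift_comp_π hu hψ)
  refine ⟨χ, ⟨this, hfac⟩, fun χ' ⟨_, hχ'⟩ => FunS.Hom.ext' (precompAt_hom_ext hu ?_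
    (congrArg FunS.Hom.η (hχ'.trans hfac.symm)))⟩
  exact congrArg Subtype.val (IsHomLift.map_eq_map (p := evalTarget m W x) g χ' χ)

lemma evalSource_isFibered (y : R)
    (hu : ∀ {a b : ZigVert m} (_ : a ⟶ b),
      (Paths.of _).obj b ≠ (Paths.of _).obj (zigSource m))
    (hc : (Paths.of _).obj (zigTarget m) ≠ (Paths.of _).obj (zigSource m)) :
    (evalSource m W y).IsFibered := by
  refine .of_exists_isStronglyCartesian fun X S f => ?_
  let X' : FunT m W y :=
    ⟨precompAt f.1 hu, X.rel.precompAt f.2 hu, (precompAt_obj_of_ne _ _ hc).trans X.hy⟩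
  let φ : X' ⟶ X := ⟨precompAtπ f.1 hu, precompAtApp_mem f.2, precompAtApp_of_ne _ hc⟩
  have hX' : (evalSource m W y).obj X' = S := precompAt_obj_self f.1 hu
  have : (evalSource m W y).IsHomLift f φ :=
    WideSub.isHomLift_of_val_eq_eqToHom_comp _ _ _ hX'
      ((precompAtApp_self f.1).trans
        (congrArg (· ≫ f.1) (WideSub.eqToHom_val hX').symm))
  refine ⟨X', φ, ⟨fun {X''} g ψ _ => ?_⟩⟩
  have hψ : ψ.η.app _ = g.1 ≫ f.1 :=
    (congrArg Subtype.val (IsHomLift.eq_of_isHomLift (evalSource m W y) (g ≫ f) ψ)).symm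
  let χ : X'' ⟶ X' :=
    ⟨precompAtLift hu hψ, precompAtLiftApp_mem g.2 ψ.mem,
      (precompAtLiftApp_of_ne ψ.η g.1 hc).trans (by rw [ψ.hₚ, eqToHom_trans])⟩
  have : (evalSource m W y).IsHomLift g χ :=
    WideSub.isHomLift_of_val_eq_comp_eqToHom _ _ _ hX'
      ((precompAtLiftApp_self ψ.η g.1).trans
        (congrArg (g.1 ≫ ·) (WideSub.eqToHom_val hX'.symm).symm))
  have hfac : χ ≫ φ = ψ := FunT.Hom.ext' (precompAtLift_comp_π hu hψ)
  refine ⟨χ, ⟨this, hfac⟩, fun χ' ⟨_, hχ'⟩ => FunT.Hom.ext' (precompAt_hom_ext hu ?_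
    (congrArg FunT.Hom.η (hχ'.trans hfac.symm)))⟩
  exact congrArg Subtype.val (IsHomLift.map_eq_map (p := evalSource m W y) g χ' χ)

lemma evalTarget_op_isFibered (x : R)
    (hu : ∀ {a b : ZigVert m} (_ : a ⟶ b),
      (Paths.of _).obj a ≠ (Paths.of _).obj (zigTarget m))
    (hc : (Paths.of _).obj (zigSource m) ≠ (Paths.of _).obj (zigTarget m)) :
    (evalTarget m W x).op.IsFibered := by
  refine .op_of_exists_isStronglyCocartesian fun X S f => ?_
  let X' : FunS m W x :=
    ⟨postcompAt f.1 hu, X.rel.postcompAt f.2 hu, (postcompAt_obj_of_ne _ _ hc).trans X.hx⟩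
  let φ : X ⟶ X' := ⟨postcompAtι f.1 hu, postcompAtApp_mem f.2, postcompAtApp_of_ne _ hc⟩
  have hX' : (evalTarget m W x).obj X' = S := postcompAt_obj_self f.1 hu
  have : (evalTarget m W x).IsHomLift f φ :=
    WideSub.isHomLift_of_val_eq_comp_eqToHom _ _ _ hX'
      ((postcompAtApp_self f.1).trans
        (congrArg (f.1 ≫ ·) (WideSub.eqToHom_val hX'.symm).symm))
  refine ⟨X', φ, ⟨fun {X''} g ψ _ => ?_⟩⟩
  have hψ : ψ.η.app _ = f.1 ≫ g.1 :=
    (congrArg Subtype.val (IsHomLift.eq_of_isHomLift (evalTarget m W x) (f ≫ g) ψ)).symm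
  let χ : X' ⟶ X'' :=
    ⟨postcompAtDesc hu hψ, postcompAtDescApp_mem g.2 ψ.mem,
      (postcompAtDescApp_of_ne ψ.η g.1 hc).trans (by rw [ψ.h₀, eqToHom_trans])⟩
  have : (evalTarget m W x).IsHomLift g χ :=
    WideSub.isHomLift_of_val_eq_eqToHom_comp _ _ _ hX'
      ((postcompAtDescApp_self ψ.η g.1).trans
        (congrArg (· ≫ g.1) (WideSub.eqToHom_val hX').symm))
  have hfac : φ ≫ χ = ψ := FunS.Hom.ext' (postcompAtι_comp_desc hu hψ)
  refine ⟨χ, ⟨this, hfac⟩, fun χ' ⟨_, hχ'⟩ => FunS.Hom.ext' (postcompAt_hom_ext hu ?_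
    (congrArg FunS.Hom.η (hχ'.trans hfac.symm)))⟩
  exact congrArg Subtype.val (IsHomLift.map_eq_map (p := evalTarget m W x) g χ' χ)

lemma evalSource_op_isFibered (y : R)
    (hu : ∀ {a b : ZigVert m} (_ : a ⟶ b),
      (Paths.of _).obj a ≠ (Paths.of _).obj (zigSource m))
    (hc : (Paths.of _).obj (zigTarget m) ≠ (Paths.of _).obj (zigSource m)) :
    (evalSource m W y).op.IsFibered := by
  refine .op_of_exists_isStronglyCocartesian fun X S f => ?_
  let X' : FunT m W y :=
    ⟨postcompAt f.1 hu, X.rel.postcompAt f.2 hu, (postcompAt_obj_of_ne _ _ hc).trans X.hy⟩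
  let φ : X ⟶ X' := ⟨postcompAtι f.1 hu, postcompAtApp_mem f.2, postcompAtApp_of_ne _ hc⟩
  have hX' : (evalSource m W y).obj X' = S := postcompAt_obj_self f.1 hu
  have : (evalSource m W y).IsHomLift f φ :=
    WideSub.isHomLift_of_val_eq_comp_eqToHom _ _ _ hX'
      ((postcompAtApp_self f.1).trans
        (congrArg (f.1 ≫ ·) (WideSub.eqToHom_val hX'.symm).symm))
  refine ⟨X', φ, ⟨fun {X''} g ψ _ => ?_⟩⟩
  have hψ : ψ.η.app _ = f.1 ≫ g.1 :=
    (congrArg Subtype.val (IsHomLift.eq_of_isHomLift (evalSource m W y) (f ≫ g) ψ)).symm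
  let χ : X' ⟶ X'' :=
    ⟨postcompAtDesc hu hψ, postcompAtDescApp_mem g.2 ψ.mem,
      (postcompAtDescApp_of_ne ψ.η g.1 hc).trans (by rw [ψ.hₚ, eqToHom_trans])⟩
  have : (evalSource m W y).IsHomLift g χ :=
    WideSub.isHomLift_of_val_eq_eqToHom_comp _ _ _ hX'
      ((postcompAtDescApp_self ψ.η g.1).trans
        (congrArg (· ≫ g.1) (WideSub.eqToHom_val hX').symm))
  have hfac : φ ≫ χ = ψ := FunT.Hom.ext' (postcompAtι_comp_desc hu hψ)
  refine ⟨χ, ⟨this, hfac⟩, fun χ' ⟨_, hχ'⟩ => FunT.Hom.ext' (postcompAt_hom_ext hu ?_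
    (congrArg FunT.Hom.η (hχ'.trans hfac.symm)))⟩
  exact congrArg Subtype.val (IsHomLift.map_eq_map (p := evalSource m W y) g χ' χ)

end Evaluation

/-- For a nonempty zigzag word `m = (t 1, …, t p)`:
(i) if `t p = A`, evaluation at the vertex `p` on `Fun_s(m, R; x)` is a Grothendieck
opfibration over `𝒲` (its opposite is a Grothendieck fibration);
(ii) if `t p = W`, it is a Grothendieck fibration;
(iii) if `t 1 = W`, evaluation at the vertex `0` on `Fun_t(m, R; y)` is a Grothendieck
opfibration; and
(iv) if `t 1 = A`, it is a Grothendieck fibration. -/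
theorem eval_fibration_of_zigzagWord
    (W : MorphismProperty R) [W.IsMultiplicative] (x y : R)
    (m : ZigzagWord) (hm : m ≠ []) :
    (m.getLast hm = ZigSym.A → (evalTarget m W x).op.IsFibered) ∧
    (m.getLast hm = ZigSym.W → (evalTarget m W x).IsFibered) ∧
    (m.head hm = ZigSym.W → (evalSource m W y).op.IsFibered) ∧
    (m.head hm = ZigSym.A → (evalSource m W y).IsFibered) :=
  ⟨fun h => evalTarget_op_isFibered W x (of_obj_ne_zigTarget_of_getLast_eq_A hm h)
      (zigSource_ne_zigTarget hm),
    fun h => evalTarget_isFibered W x (of_obj_ne_zigTarget_of_getLast_eq_W hm h)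
      (zigSource_ne_zigTarget hm),
    fun h => evalSource_op_isFibered W y (of_obj_ne_zigSource_of_head_eq_W hm h)
      (zigSource_ne_zigTarget hm).symm,
    fun h => evalSource_isFibered W y (of_obj_ne_zigSource_of_head_eq_A hm h)
      (zigSource_ne_zigTarget hm).symm⟩
end
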